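/- Let m ≥ 1, u ≥ 1, j, j' be integers with 0 ≤ j ≤ m, 0 ≤ j' ≤ um, and j' ≡ j (mod 2). Then φ(m,j,−(j'+j)/2 − 1) = φ(m,j,(j'−j)/2) if and only if m > 1 and j' ≤ j − 2. -/

import Mathlib

/-!
Put `b = (j' - j) / 2`, so that the two arguments are `b` and its reflection `-j - 1 - b`.
Writing `b = m q + r` and comparing the branches of `φ` on both sides gives the closed form
`φ(m,j,b) - φ(m,j,-j-1-b) = ⌊b/m⌋ + ⌊(b+j)/m⌋ + 1`. Since `j ≤ m`, the two floors differ by at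
most one, so the right side vanishes exactly when `⌊b/m⌋ = -1` and `⌊(b+j)/m⌋ = 0`, i.e. when
`-j ≤ b ≤ -1`; in terms of `j'` this is `j' ≤ j - 2`, which in turn forces `m ≥ j ≥ 2`.
-/

/-- The δ-coefficient function `φ(m,j,k)` for type `A₁⁽¹⁾`: writing `k = m*q + r` by
Euclidean division (`0 ≤ r < m` when `1 ≤ m`), set `φ(m,j,k) = -q*(k+r+j) - r` if
`0 ≤ r ≤ m - j`, and `φ(m,j,k) = -q*(k+r+j) + m - j - 2*r` if `m - j ≤ r < m`
(the two expressions agree at `r = m - j`). -/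
def phi (m j k : ℤ) : ℤ :=
  -(k.ediv m) * (k + k.emod m + j) +
    (if k.emod m ≤ m - j then -(k.emod m) else m - j - 2 * (k.emod m))

theorem phi_def (m j k : ℤ) :
    phi m j k = -(k / m) * (k + k % m + j) +
      if k % m ≤ m - j then -(k % m) else m - j - 2 * (k % m) :=
  rfl

theorem phi_mul_add {m r : ℤ} (j q : ℤ) (hr0 : 0 ≤ r) (hrm : r < m) :
    phi m j (m * q + r) = -q * (m * q + 2 * r + j) +
      if r ≤ m - j then -r else m - j - 2 * r := by
  obtain ⟨hdiv, hmod⟩ := (Int.ediv_emod_unique (by omega)).2 ⟨add_comm r (m * q), hr0, hrm⟩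
  rw [phi_def, hdiv, hmod]
  ring

theorem phi_mul_add_of_le {m j r : ℤ} (q : ℤ) (hr0 : 0 ≤ r) (hrm : r < m) (hr : r ≤ m - j) :
    phi m j (m * q + r) = -q * (m * q + 2 * r + j) - r := by
  rw [phi_mul_add j q hr0 hrm, if_pos hr]
  ring

theorem phi_mul_add_of_ge {m j r : ℤ} (q : ℤ) (hr0 : 0 ≤ r) (hrm : r < m) (hr : m - j ≤ r) :
    phi m j (m * q + r) = -q * (m * q + 2 * r + j) + (m - j - 2 * r) := by
  rw [phi_mul_add j q hr0 hrm]
  split_ifs <;> omega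

theorem ediv_add_le_ediv_add_one {m : ℤ} (hm : 0 < m) {j : ℤ} (hjm : j ≤ m) (k : ℤ) :
    (k + j) / m ≤ k / m + 1 :=
  calc (k + j) / m ≤ (k + 1 * m) / m := Int.ediv_le_ediv hm (by omega)
    _ = k / m + 1 := Int.add_mul_ediv_right k 1 hm.ne'

theorem phi_sub_phi_neg_sub_one_sub {m j : ℤ} (hm : 0 < m) (hj0 : 0 ≤ j) (hjm : j ≤ m) (k : ℤ) :
    phi m j k - phi m j (-j - 1 - k) = k / m + (k + j) / m + 1 := by
  obtain ⟨q, r, rfl, hr0, hrm⟩ : ∃ q r, k = m * q + r ∧ 0 ≤ r ∧ r < m :=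
    ⟨k / m, k % m, (Int.mul_ediv_add_emod k m).symm, Int.emod_nonneg k hm.ne',
      Int.emod_lt_of_pos k hm⟩
  have ediv_eq {a : ℤ} (p : ℤ) (h₁ : m * p ≤ a) (h₂ : a < m * p + m) : a / m = p :=
    (Int.ediv_eq_iff_of_pos hm).2 ⟨by linarith, by linarith⟩
  rw [ediv_eq q (by omega) (by omega)]
  rcases lt_or_ge (r + j) m with hrj | hrj
  · rw [show -j - 1 - (m * q + r) = m * (-q - 1) + (m - r - j - 1) by ring,
      phi_mul_add_of_le q hr0 hrm (by omega),
      phi_mul_add_of_le (-q - 1) (by omega) (by omega) (by omega),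
      ediv_eq q (by linarith) (by linarith)]
    ring
  · rw [show -j - 1 - (m * q + r) = m * (-q - 2) + (2 * m - r - j - 1) by ring,
      phi_mul_add_of_ge q hr0 hrm (by omega),
      phi_mul_add_of_ge (-q - 2) (by omega) (by omega) (by omega),
      ediv_eq (q + 1) (by linarith) (by linarith)]
    ring

theorem phi_neg_sub_one_sub_eq_iff {m j : ℤ} (hm : 0 < m) (hj0 : 0 ≤ j) (hjm : j ≤ m) (k : ℤ) :
    phi m j (-j - 1 - k) = phi m j k ↔ -j ≤ k ∧ k ≤ -1 := by
  rw [eq_comm, ← sub_eq_zero, phi_sub_phi_neg_sub_one_sub hm hj0 hjm]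
  have hmono : k / m ≤ (k + j) / m := Int.ediv_le_ediv hm (by omega)
  have hstep := ediv_add_le_ediv_add_one hm hjm k
  have hk := Int.ediv_eq_iff_of_pos (x := k) (y := -1) hm
  have hkj := Int.ediv_eq_iff_of_pos (x := k + j) (y := 0) hm
  generalize k / m = a at *
  generalize (k + j) / m = b at *
  omega

theorem phi_equality_iff_A1_general (m j j' : ℤ) (hm : 1 ≤ m)
    (hj0 : 0 ≤ j) (hjm : j ≤ m) (hj'0 : 0 ≤ j')
    (hpar : 2 ∣ j' - j) :
    phi m j (-((j' + j) / 2) - 1) = phi m j ((j' - j) / 2) ↔ 1 < m ∧ j' ≤ j - 2 := by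
  obtain ⟨b, hb⟩ := hpar
  rw [show -((j' + j) / 2) - 1 = -j - 1 - b by omega, show (j' - j) / 2 = b by omega,
    phi_neg_sub_one_sub_eq_iff (by omega) hj0 hjm]
  omega

/-- For `m, u ≥ 1`, `0 ≤ j ≤ m`, `0 ≤ j' ≤ um`, `j' ≡ j (mod 2)`:
`φ(m,j,−(j'+j)/2 − 1) = φ(m,j,(j'−j)/2)` iff `m > 1` and `j' ≤ j − 2`. -/
theorem phi_equality_iff_A1 (m u j j' : ℤ) (hm : 1 ≤ m) (hu : 1 ≤ u)
    (hj0 : 0 ≤ j) (hjm : j ≤ m) (hj'0 : 0 ≤ j') (hj'um : j' ≤ u * m)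
    (hpar : 2 ∣ j' - j) :
    phi m j (-((j' + j) / 2) - 1) = phi m j ((j' - j) / 2) ↔ 1 < m ∧ j' ≤ j - 2 :=
  phi_equality_iff_A1_general m j j' hm hj0 hjm hj'0 hpar
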